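/- Let 1 ≤ p < ∞, 0 ≤ λ < 1, let H be the finite Hilbert transform on (-1,1), and let u, v be nonnegative weights on (-1,1) such that ‖u·Hg‖_{p,λ} ≤ C ‖v·g‖_{p,λ} for every g with v·g ∈ 𝓛^{p,λ}(-1,1). Then for all r, s ∈ (-1,1) with r ≤ s and every f with v·f ∈ 𝓛^{p,λ}(-1,1), one has ( ∫_{-1}^{r} |f(t)|/(s-t) dt ) · ‖u·χ_{(r,s)}‖_{p,λ} ≤ C ‖v·f·χ_{(-1,r)}‖_{p,λ}, with the same constant C. -/

import Mathlib

open MeasureTheory Set Filter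
open scoped ENNReal

noncomputable section

/-- Generalized binomial coefficient `C(z, k) = z(z-1)⋯(z-k+1)/k!`. -/
def genBinom (z : ℝ) (k : ℕ) : ℝ :=
  (∏ i ∈ Finset.range k, (z - i)) / (Nat.factorial k)

/-- The classical Jacobi polynomial `P_n^{(a,b)}(x)`
(Szegő (4.3.2)); it satisfies `P_n^{(a,b)}(1) = binom(n+a, n)`. -/
def jacobiP (a b : ℝ) (n : ℕ) (x : ℝ) : ℝ :=
  ∑ ν ∈ Finset.range (n + 1),
    genBinom (n + a) (n - ν) * genBinom (n + b) ν *
      ((x - 1) / 2) ^ ν * ((x + 1) / 2) ^ (n - ν)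

/-- The normalizing constant
`d_n^{(a,b)} = (∫_{-1}^1 (P_n^{(a,b)}(x))² (1-x)^a (1+x)^b dx)^{-1/2}`. -/
def jacobiD (a b : ℝ) (n : ℕ) : ℝ :=
  (∫ x in Set.Ioo (-1 : ℝ) 1,
      (jacobiP a b n x) ^ 2 * (1 - x) ^ a * (1 + x) ^ b) ^ (-(1 : ℝ) / 2)

/-- The Jacobi function `p_n^{(a,b)}(x) = d_n^{(a,b)} P_n^{(a,b)}(x) (1-x)^{a/2} (1+x)^{b/2}`. -/
def jacobiFun (a b : ℝ) (n : ℕ) (x : ℝ) : ℝ :=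
  jacobiD a b n * jacobiP a b n x * (1 - x) ^ (a / 2) * (1 + x) ^ (b / 2)

/-- The Fourier–Jacobi coefficient `a_k^{(a,b)}(f) = ∫_{-1}^1 p_k^{(a,b)}(t) f(t) dt`. -/
def fourierJacobiCoeff (a b : ℝ) (k : ℕ) (f : ℝ → ℝ) : ℝ :=
  ∫ t in Set.Ioo (-1 : ℝ) 1, jacobiFun a b k t * f t

/-- The partial sum `S_n f = ∑_{k=0}^n a_k^{(a,b)}(f) p_k^{(a,b)}`. -/
def jacobiPartialSum (a b : ℝ) (n : ℕ) (f : ℝ → ℝ) (x : ℝ) : ℝ :=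
  ∑ k ∈ Finset.range (n + 1), fourierJacobiCoeff a b k f * jacobiFun a b k x

/-- The Morrey norm
`‖f‖_{p,λ} = sup_{x∈(-1,1), r>0} ( r^{-λ} ∫_{B(x,r)} |f(t)|^p dt )^{1/p}`,
where `B(x,r) = {t ∈ (-1,1) : |t-x| ≤ r}`, computed in `ℝ≥0∞`. -/
def morreyNorm (p lam : ℝ) (f : ℝ → ℝ) : ℝ≥0∞ :=
  ⨆ (x : ℝ) (_ : x ∈ Set.Ioo (-1 : ℝ) 1) (r : ℝ) (_ : 0 < r),
    (ENNReal.ofReal (r ^ (-lam)) *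
      ∫⁻ t in {t : ℝ | t ∈ Set.Ioo (-1 : ℝ) 1 ∧ |t - x| ≤ r},
        ENNReal.ofReal (|f t| ^ p)) ^ (1 / p)

/-- Membership in the Morrey space `𝓛^{p,λ}(-1,1)`:
measurable functions with finite Morrey norm. -/
def MemMorrey (p lam : ℝ) (f : ℝ → ℝ) : Prop :=
  Measurable f ∧ morreyNorm p lam f < ⊤

/-- The finite Hilbert transform `H f(x) = p.v. ∫_{-1}^1 f(t)/(x-t) dt` on `(-1,1)`. -/
def finiteHilbert (f : ℝ → ℝ) (x : ℝ) : ℝ :=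
  limUnder (nhdsWithin (0 : ℝ) (Set.Ioi 0)) fun ε =>
    ∫ t in {t : ℝ | t ∈ Set.Ioo (-1 : ℝ) 1 ∧ ε ≤ |x - t|}, f t / (x - t)

/-- The dual-type quantity
`‖g‖*_{q,λ} = inf_{x∈(-1,1)} ∫_0^∞ r^{λ/p−1} ‖χ_{(B(x,r))^c} g‖_{L^q(-1,1)} dr`. -/
def starNorm (p lam q : ℝ) (g : ℝ → ℝ) : ℝ≥0∞ :=
  ⨅ (x : ℝ) (_ : x ∈ Set.Ioo (-1 : ℝ) 1),
    ∫⁻ r in Set.Ioi (0 : ℝ),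
      ENNReal.ofReal (r ^ (lam / p - 1)) *
        (∫⁻ t in {t : ℝ | t ∈ Set.Ioo (-1 : ℝ) 1 ∧ r < |t - x|},
          ENNReal.ofReal (|g t| ^ q)) ^ (1 / q)

/-- The `L^p(-1,1)` norm (in `ℝ≥0∞`). -/
def lpNorm (p : ℝ) (g : ℝ → ℝ) : ℝ≥0∞ :=
  (∫⁻ t in Set.Ioo (-1 : ℝ) 1, ENNReal.ofReal (|g t| ^ p)) ^ (1 / p)


/- Test the bound on `g = |f| χ_{(-1,r)}`. On `(r,s)` the principal value `H g(x)` is an honest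
integral with no singularity, `∫_{-1}^r |f(t)|/(x-t) dt`, and it only grows as `x` decreases from
`s`, so `H g ≥ ∫_{-1}^r |f(t)|/(s-t) dt` there; the Morrey norm is monotone in `|·|` and
positively homogeneous, which turns this pointwise bound into the claimed one. -/

section Morrey

variable {p lam : ℝ}

lemma morreyNorm_mono_ae (hp : 0 ≤ p) {f₁ f₂ : ℝ → ℝ} (h : ∀ᵐ t, |f₁ t| ≤ |f₂ t|) :
    morreyNorm p lam f₁ ≤ morreyNorm p lam f₂ := by
  unfold morreyNorm
  refine iSup₂_mono fun x _ => iSup₂_mono fun r _ => ?_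
  refine ENNReal.rpow_le_rpow (mul_le_mul_right ?_ _) (by positivity)
  refine lintegral_mono_ae (ae_restrict_of_ae ?_)
  filter_upwards [h] with t ht
  exact ENNReal.ofReal_le_ofReal (Real.rpow_le_rpow (abs_nonneg _) ht hp)

lemma morreyNorm_congr_abs (hp : 0 ≤ p) {f₁ f₂ : ℝ → ℝ} (h : ∀ t, |f₁ t| = |f₂ t|) :
    morreyNorm p lam f₁ = morreyNorm p lam f₂ :=
  le_antisymm (morreyNorm_mono_ae hp (.of_forall fun t => (h t).le))
    (morreyNorm_mono_ae hp (.of_forall fun t => (h t).ge))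

lemma ofReal_mul_morreyNorm (hp : 0 < p) {c : ℝ} (hc : 0 ≤ c) (f : ℝ → ℝ) :
    ENNReal.ofReal c * morreyNorm p lam f = morreyNorm p lam (fun x => c * f x) := by
  have hc_pow (X : ℝ≥0∞) :
      ENNReal.ofReal c * X ^ (1 / p) = (ENNReal.ofReal (c ^ p) * X) ^ (1 / p) := by
    rw [ENNReal.mul_rpow_of_nonneg _ _ (by positivity),
      ENNReal.ofReal_rpow_of_nonneg (by positivity) (by positivity),
      ← Real.rpow_mul hc, mul_one_div_cancel hp.ne', Real.rpow_one]
  unfold morreyNorm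
  simp only [ENNReal.mul_iSup, hc_pow, mul_left_comm (ENNReal.ofReal (c ^ p)),
    ← lintegral_const_mul' _ _ ENNReal.ofReal_ne_top,
    ← ENNReal.ofReal_mul (by positivity : 0 ≤ c ^ p),
    abs_mul, abs_of_nonneg hc, Real.mul_rpow hc (abs_nonneg _)]

lemma MemMorrey.indicator_abs (hp : 0 ≤ p) {f : ℝ → ℝ} (hf : MemMorrey p lam f) {S : Set ℝ}
    (hS : MeasurableSet S) : MemMorrey p lam (S.indicator fun x => |f x|) := by
  refine ⟨hf.1.abs.indicator hS, (morreyNorm_mono_ae hp (.of_forall fun x => ?_)).trans_lt hf.2⟩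
  by_cases hx : x ∈ S <;> simp [hx]

lemma ofReal_mul_morreyNorm_indicator_le (hp : 0 < p) {c : ℝ} (hc : 0 ≤ c) {S : Set ℝ}
    {u h : ℝ → ℝ} (hh : ∀ x ∈ S, c ≤ |h x|) :
    ENNReal.ofReal c * morreyNorm p lam (fun x => u x * S.indicator 1 x) ≤
      morreyNorm p lam (fun x => u x * h x) := by
  rw [ofReal_mul_morreyNorm hp hc]
  refine morreyNorm_mono_ae hp.le (.of_forall fun x => ?_)
  by_cases hx : x ∈ S
  · simp only [indicator_of_mem hx, Pi.one_apply, mul_one, abs_mul, abs_of_nonneg hc]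
    rw [mul_comm]
    exact mul_le_mul_of_nonneg_left (hh x hx) (abs_nonneg _)
  · simp only [indicator_of_notMem hx, mul_zero, abs_zero]
    positivity

end Morrey

lemma finiteHilbert_indicator_Ioo {r x : ℝ} (hr : r ≤ 1) (hx : r < x) (φ : ℝ → ℝ) :
    finiteHilbert ((Ioo (-1) r).indicator φ) x = ∫ t in Ioo (-1) r, φ t / (x - t) := by
  have h_trunc {ε : ℝ} (hε : ε ≤ x - r) :
      ∫ t in {t | t ∈ Ioo (-1 : ℝ) 1 ∧ ε ≤ |x - t|}, (Ioo (-1) r).indicator φ t / (x - t) =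
        ∫ t in Ioo (-1) r, φ t / (x - t) := by
    have h_sub : Ioo (-1) r ⊆ {t | t ∈ Ioo (-1 : ℝ) 1 ∧ ε ≤ |x - t|} := fun t ht =>
      ⟨⟨ht.1, ht.2.trans_le hr⟩, by rw [abs_of_pos (by linarith [ht.2])]; linarith [ht.2]⟩
    have h_ind : (fun t => (Ioo (-1) r).indicator φ t / (x - t)) =
        (Ioo (-1) r).indicator fun t => φ t / (x - t) := by
      ext t; by_cases ht : t ∈ Ioo (-1) r <;> simp [ht]
    rw [h_ind, setIntegral_indicator measurableSet_Ioo, inter_eq_self_of_subset_right h_sub]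
  refine Tendsto.limUnder_eq (tendsto_const_nhds.congr' ?_)
  filter_upwards [mem_nhdsWithin_of_mem_nhds (Iio_mem_nhds (sub_pos.2 hx))] with ε hε
  exact (h_trunc (le_of_lt hε)).symm

section DivSub

variable {φ : ℝ → ℝ} {S : Set ℝ} {r x s : ℝ}

lemma IntegrableOn.div_sub_of_le (hφ : IntegrableOn (fun t => φ t / (s - t)) S)
    (hS : MeasurableSet S) (hSr : ∀ t ∈ S, t < r) (hrx : r < x) (hxs : x ≤ s) :
    IntegrableOn (fun t => φ t / (x - t)) S := by
  refine (hφ.norm.const_mul ((s - r) / (x - r))).mono' ?_ ?_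
  · have h_ratio : Measurable fun t : ℝ => (s - t) / (x - t) := by fun_prop
    refine (hφ.1.mul h_ratio.aestronglyMeasurable).congr ?_
    filter_upwards [ae_restrict_mem hS] with t ht
    have : x - t ≠ 0 := by linarith [hSr t ht]
    have : s - t ≠ 0 := by linarith [hSr t ht]
    simp only [Pi.mul_apply]
    field_simp
  · filter_upwards [ae_restrict_mem hS] with t ht
    have htr : t < r := hSr t ht
    have h_ratio : (s - t) / (x - t) ≤ (s - r) / (x - r) := by
      rw [div_le_div_iff₀ (by linarith) (by linarith)]; nlinarith
    calc ‖φ t / (x - t)‖ = (s - t) / (x - t) * ‖φ t / (s - t)‖ := by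
          simp only [Real.norm_eq_abs, abs_div, abs_of_pos (by linarith : 0 < x - t),
            abs_of_pos (by linarith : 0 < s - t)]
          field_simp [(by linarith : x - t ≠ 0), (by linarith : s - t ≠ 0)]
      _ ≤ (s - r) / (x - r) * ‖φ t / (s - t)‖ := by gcongr

lemma setIntegral_div_sub_le (hφ : ∀ t, 0 ≤ φ t) (hS : MeasurableSet S) (hSr : ∀ t ∈ S, t < r)
    (hrx : r < x) (hxs : x ≤ s) :
    ∫ t in S, φ t / (s - t) ≤ ∫ t in S, φ t / (x - t) := by
  by_cases hint : IntegrableOn (fun t => φ t / (s - t)) S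
  · refine setIntegral_mono_on hint (IntegrableOn.div_sub_of_le hint hS hSr hrx hxs) hS
      fun t ht => ?_
    have htr := hSr t ht
    exact div_le_div_of_nonneg_left (hφ t) (by linarith) (by linarith)
  · rw [integral_undef hint]
    exact setIntegral_nonneg hS fun t ht => div_nonneg (hφ t) (by linarith [hSr t ht])

end DivSub

theorem hilbert_weights_testing_general (p lam : ℝ) (u v : ℝ → ℝ) (C : ℝ)
    (hp : 1 ≤ p) (hv : ∀ x, 0 ≤ v x)
    (hbound : ∀ g : ℝ → ℝ, MemMorrey p lam (fun x => v x * g x) →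
      morreyNorm p lam (fun x => u x * finiteHilbert g x) ≤
        ENNReal.ofReal C * morreyNorm p lam (fun x => v x * g x)) :
    ∀ r s : ℝ, r ∈ Set.Ioo (-1 : ℝ) 1 → s ∈ Set.Ioo (-1 : ℝ) 1 → r ≤ s →
      ∀ f : ℝ → ℝ, MemMorrey p lam (fun x => v x * f x) →
        ENNReal.ofReal (∫ t in Set.Ioo (-1 : ℝ) r, |f t| / (s - t)) *
            morreyNorm p lam (fun x => u x * Set.indicator (Set.Ioo r s) 1 x) ≤
          ENNReal.ofReal C *
            morreyNorm p lam
              (fun x => v x * f x * Set.indicator (Set.Ioo (-1 : ℝ) r) 1 x) := by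
  intro r s hr _ _ f hf
  have hp0 : 0 < p := by linarith
  set A := ∫ t in Ioo (-1 : ℝ) r, |f t| / (s - t)
  set g := (Ioo (-1 : ℝ) r).indicator fun t => |f t|
  have hg : MemMorrey p lam (fun x => v x * g x) := by
    have h_eq : (fun x => v x * g x) = (Ioo (-1 : ℝ) r).indicator fun x => |v x * f x| := by
      ext x; by_cases hx : x ∈ Ioo (-1 : ℝ) r <;> simp [g, hx, abs_mul, abs_of_nonneg (hv x)]
    exact h_eq ▸ hf.indicator_abs hp0.le measurableSet_Ioo
  have hA : 0 ≤ A :=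
    setIntegral_nonneg measurableSet_Ioo fun t ht => div_nonneg (abs_nonneg _) (by linarith [ht.2])
  have hHg (x : ℝ) (hx : x ∈ Ioo r s) : A ≤ finiteHilbert g x := by
    rw [finiteHilbert_indicator_Ioo hr.2.le hx.1]
    exact setIntegral_div_sub_le (fun t => abs_nonneg _) measurableSet_Ioo (fun t ht => ht.2)
      hx.1 hx.2.le
  calc ENNReal.ofReal A * morreyNorm p lam (fun x => u x * (Ioo r s).indicator 1 x)
      ≤ morreyNorm p lam (fun x => u x * finiteHilbert g x) :=
        ofReal_mul_morreyNorm_indicator_le hp0 hA fun x hx => (hHg x hx).trans (le_abs_self _)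
    _ ≤ ENNReal.ofReal C * morreyNorm p lam (fun x => v x * g x) := hbound g hg
    _ = ENNReal.ofReal C *
          morreyNorm p lam (fun x => v x * f x * (Ioo (-1 : ℝ) r).indicator 1 x) := by
        congr 1
        refine morreyNorm_congr_abs hp0.le fun x => ?_
        by_cases hx : x ∈ Ioo (-1 : ℝ) r <;> simp [g, hx, abs_mul]

/-- If the finite Hilbert transform satisfies a two-weight Morrey
bound `‖u·Hg‖_{p,λ} ≤ C ‖v·g‖_{p,λ}`, then for `r ≤ s` in `(-1,1)` one has
`(∫_{-1}^r |f(t)|/(s-t) dt) ‖u·χ_{(r,s)}‖_{p,λ} ≤ C ‖v·f·χ_{(-1,r)}‖_{p,λ}`,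
with the same constant `C`. -/
theorem hilbert_weights_testing (p lam : ℝ) (u v : ℝ → ℝ) (C : ℝ)
    (hp : 1 ≤ p) (hlam0 : 0 ≤ lam) (hlam1 : lam < 1) (hC : 0 ≤ C)
    (hu : ∀ x, 0 ≤ u x) (hv : ∀ x, 0 ≤ v x)
    (hbound : ∀ g : ℝ → ℝ, MemMorrey p lam (fun x => v x * g x) →
      morreyNorm p lam (fun x => u x * finiteHilbert g x) ≤
        ENNReal.ofReal C * morreyNorm p lam (fun x => v x * g x)) :
    ∀ r s : ℝ, r ∈ Set.Ioo (-1 : ℝ) 1 → s ∈ Set.Ioo (-1 : ℝ) 1 → r ≤ s →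
      ∀ f : ℝ → ℝ, MemMorrey p lam (fun x => v x * f x) →
        ENNReal.ofReal (∫ t in Set.Ioo (-1 : ℝ) r, |f t| / (s - t)) *
            morreyNorm p lam (fun x => u x * Set.indicator (Set.Ioo r s) 1 x) ≤
          ENNReal.ofReal C *
            morreyNorm p lam
              (fun x => v x * f x * Set.indicator (Set.Ioo (-1 : ℝ) r) 1 x) :=
  hilbert_weights_testing_general p lam u v C hp hv hbound
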